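/- Let S = {s^{(2)}_n : n ≥ 1} and S' = {2·s^{(2)}_n − 1 : n ≥ 1}. Then every even positive integer N can be written as N = t + t' with t, t' ∈ S ∪ S'. -/

import Mathlib

/-- Moser function `m_r(n)`: reinterpret the base-`r` digits of `n` as base-`r²` digits,
i.e. `m_r(n) = Σ_i ν_i r^(2i)` where `n = Σ_i ν_i r^i` is the base-`r` expansion. -/
def moser (r n : ℕ) : ℕ := Nat.ofDigits (r ^ 2) (Nat.digits r n)

/-- `s^(r)_n = r · m_r(n−1) + 1` for `n ≥ 1`. -/
def moserS (r n : ℕ) : ℕ := r * moser r (n - 1) + 1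

/-- The `i`-th base-`r` digit of `n` (0 if beyond the expansion). -/
def dig (r n i : ℕ) : ℕ := (Nat.digits r n).getD i 0

/-- Josephus–Groër survivor function: with `M = N` if `N` is odd, `M = N − 1` otherwise,
and `M = Σ_j b_j 2^j` the binary expansion, `W(N) = 1 + Σ_{j odd} b_j 2^j`. -/
def W (N : ℕ) : ℕ :=
  let M := if N % 2 = 1 then N else N - 1
  1 + ((((Nat.digits 2 M).zipIdx.map Prod.swap).filter (fun p => p.1 % 2 = 1)).map (fun p => p.2 * 2 ^ p.1)).sum

/-!
Since `s_{a+1} = 2 m₂(a) + 1` and `2 s_{b+1} - 1 = 4 m₂(b) + 1`, these two elements sum to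
`2 (m₂(a) + 2 m₂(b)) + 2`. It remains to write every `k` as `m₂(a) + 2 m₂(b)` (Moser–de Bruijn):
let `a` collect the binary digits of `k` in even positions and `b` those in odd positions, each
packed into consecutive positions; `m₂` spreads them back out.
-/

theorem moser_add_mul {r : ℕ} (hr : 1 < r) {d : ℕ} (hd : d < r) (n : ℕ) :
    moser r (d + r * n) = d + r ^ 2 * moser r n := by
  by_cases h : d = 0 ∧ n = 0
  · obtain ⟨rfl, rfl⟩ := h
    simp [moser]
  · rw [moser, Nat.digits_add r hr d n hd (not_and_or.mp h), Nat.ofDigits_cons]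
    rfl

def evenBits (m : ℕ) : ℕ :=
  if m = 0 then 0 else m % 2 + 2 * evenBits (m / 4)
decreasing_by omega

theorem evenBits_eq (m : ℕ) : evenBits m = m % 2 + 2 * evenBits (m / 4) := by
  rw [evenBits]
  split_ifs with hm
  · subst hm
    rw [evenBits]
    simp
  · rfl

theorem moser_two_evenBits (m : ℕ) :
    moser 2 (evenBits m) = m % 2 + 4 * moser 2 (evenBits (m / 4)) := by
  rw [evenBits_eq m, moser_add_mul one_lt_two (Nat.mod_lt m two_pos)]
  rfl

theorem moser_two_evenBits_add_two_mul (m : ℕ) :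
    moser 2 (evenBits m) + 2 * moser 2 (evenBits (m / 2)) = m := by
  induction m using Nat.strong_induction_on with
  | _ m ih =>
    rcases Nat.eq_zero_or_pos m with rfl | hm
    · simp [evenBits, moser]
    · have ih_half := ih (m / 2) (by omega)
      rw [Nat.div_div_eq_div_mul, show 2 * 2 = 4 from rfl] at ih_half
      rw [moser_two_evenBits m]
      omega

theorem exists_moser_two_add_two_mul (m : ℕ) : ∃ a b, moser 2 a + 2 * moser 2 b = m :=
  ⟨_, _, moser_two_evenBits_add_two_mul m⟩

/-- With `S = {s^(2)_n : n ≥ 1}` and `S' = {2·s^(2)_n − 1 : n ≥ 1}`, every even positive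
integer is a sum of two elements of `S ∪ S'`. -/
theorem even_sum_of_two (N : ℕ) (hN : 0 < N) (hNe : Even N) :
    ∃ t t' : ℕ,
      t ∈ {x : ℕ | ∃ n, 1 ≤ n ∧ x = moserS 2 n} ∪
            {x : ℕ | ∃ n, 1 ≤ n ∧ x = 2 * moserS 2 n - 1} ∧
      t' ∈ {x : ℕ | ∃ n, 1 ≤ n ∧ x = moserS 2 n} ∪
            {x : ℕ | ∃ n, 1 ≤ n ∧ x = 2 * moserS 2 n - 1} ∧
      N = t + t' := by
  obtain ⟨m, rfl⟩ : ∃ m, N = 2 * m + 2 := by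
    obtain ⟨k, rfl⟩ := hNe
    exact ⟨k - 1, by omega⟩
  obtain ⟨a, b, hab⟩ := exists_moser_two_add_two_mul m
  refine ⟨moserS 2 (a + 1), 2 * moserS 2 (b + 1) - 1,
    Or.inl ⟨a + 1, le_add_self, rfl⟩, Or.inr ⟨b + 1, le_add_self, rfl⟩, ?_⟩
  simp only [moserS, Nat.add_sub_cancel]
  omega
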